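/- Under the assumptions (ε_n) i.i.d. mean-zero in L^p_B, (ρ_n) i.i.d. independent of (ε_n), E‖ρ_0‖_L^p < 1, any strictly stationary solution (X_n) of the recursion X_n − μ = ρ_n(X_{n-1} − μ) + ε_n in L^p_B coincides (in L^p) with μ + Σ_{j=0}^∞ A_{n,j} ε_{n-j}; i.e., ‖X_n − μ − Σ_{j=0}^{n-1} A_{n,j} ε_{n-j}‖_{L^p}^p → 0 as n → ∞, so the stationary solution is unique. -/

import Mathlib

open MeasureTheory Filter Topology ProbabilityTheory
noncomputable section

/-- An i.i.d. sequence indexed by `ℤ`. -/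
def IIDZ {Ω : Type*} [MeasurableSpace Ω] {E : Type*} [MeasurableSpace E]
    (X : ℤ → Ω → E) (μ : Measure Ω) : Prop :=
  iIndepFun X μ ∧ ∀ n, IdentDistrib (X n) (X 0) μ μ

/-- Strict stationarity of a `ℤ`-indexed process: the law of the whole path is
shift invariant. -/
def StrictlyStationary {Ω : Type*} [MeasurableSpace Ω] {E : Type*} [MeasurableSpace E]
    (X : ℤ → Ω → E) (μ : Measure Ω) : Prop :=
  ∀ k : ℤ, IdentDistrib (fun ω (n : ℤ) => X n ω) (fun ω (n : ℤ) => X (n + k) ω) μ μ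

/-- `prodOp ρ n j = ρ_n ∘ ⋯ ∘ ρ_{n-j+1}` (random products of operators), with
`prodOp ρ n 0 = I`. -/
def prodOp {Ω : Type*} {B : Type*} [NormedAddCommGroup B] [NormedSpace ℝ B]
    (ρ : ℤ → Ω → B →L[ℝ] B) : ℤ → ℕ → Ω → B →L[ℝ] B
  | _, 0, _ => ContinuousLinearMap.id ℝ B
  | n, (j+1), ω => (ρ n ω).comp (prodOp ρ (n-1) j ω)

/-- The (cross-)covariance operator `C_{X,Y}(x*) = E (x*(X) • Y)`, as a map from the
dual of `B` to `B`. -/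
def covFn {Ω : Type*} [MeasurableSpace Ω] {B : Type*} [NormedAddCommGroup B]
    [NormedSpace ℝ B] [CompleteSpace B] (μ : Measure Ω) (X Y : Ω → B) :
    (B →L[ℝ] ℝ) → B :=
  fun f => ∫ ω, f (X ω) • Y ω ∂μ

/-- The nuclear norm of a map `T : B* → B`: the infimum of `∑ ‖x_j**‖ ‖y_j‖` over all
nuclear representations `T x* = ∑ x_j**(x*) • y_j`. -/
def nuclearNorm {B : Type*} [NormedAddCommGroup B] [NormedSpace ℝ B]
    (T : (B →L[ℝ] ℝ) → B) : ℝ :=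
  sInf { c | ∃ (g : ℕ → ((B →L[ℝ] ℝ) →L[ℝ] ℝ)) (y : ℕ → B),
    Summable (fun j => ‖g j‖ * ‖y j‖) ∧ c = ∑' j, ‖g j‖ * ‖y j‖ ∧
    ∀ f, T f = ∑' j, g j f • y j }

/-- `B` is `r`-smooth: there is an equivalent norm `N` such that
`sup_{t>0} t^{-r} sup { N(x+ty) + N(x-ty) - 2 : N x = N y = 1 } < ∞`. -/
def RSmooth (B : Type*) [NormedAddCommGroup B] [NormedSpace ℝ B] (r : ℝ) : Prop :=
  ∃ N : B → ℝ, (∀ x y : B, N (x + y) ≤ N x + N y) ∧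
    (∀ (a : ℝ) (x : B), N (a • x) = |a| * N x) ∧
    (∃ c C : ℝ, 0 < c ∧ ∀ x : B, c * ‖x‖ ≤ N x ∧ N x ≤ C * ‖x‖) ∧
    ∃ K : ℝ, ∀ t : ℝ, 0 < t → ∀ x y : B, N x = 1 → N y = 1 →
      N (x + t • y) + N (x - t • y) - 2 ≤ K * t ^ r

variable {Ω : Type*} [MeasurableSpace Ω]
  {B : Type*} [NormedAddCommGroup B] [NormedSpace ℝ B] [CompleteSpace B]
  [TopologicalSpace.SeparableSpace B] [MeasurableSpace B] [BorelSpace B]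
  [MeasurableSpace (B →L[ℝ] B)] [BorelSpace (B →L[ℝ] B)]

open scoped ENNReal

/-!
Unrolling the recursion `k` steps gives, almost surely,
`X_n - μ₀ = ∑_{j<k} A_{n,j} ε_{n-j} + A_{n,k} (X_{n-k} - μ₀)`.
Independence of `ρ` and `ε` gives `‖A_{n,j} ε_{n-j}‖_p ≤ ‖ρ_0‖_p ^ j ‖ε_0‖_p`, so by Minkowski
every block `∑_{n ≤ j < k}` has `L^p` norm at most `‖ρ_0‖_p ^ n ‖ε_0‖_p / (1 - ‖ρ_0‖_p)`.
Since `X_{n-k}` need not be independent of the `ρ`'s, the remainder `A_{n,k} (X_{n-k} - μ₀)` is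
controlled only in probability: `‖A_{n,k}‖ ≤ ∏_{i<k} ‖ρ_{n-i}‖ → 0` in `L^p`, while `X_{n-k}`
has the law of `X_0`.
So the blocks converge in probability to `X_n - μ₀ - ∑_{j<n} A_{n,j} ε_{n-j}` as `k → ∞`, and
Fatou's lemma bounds its `L^p` norm by the geometric tail, which tends to `0`.
-/

theorem ENNReal.sum_Ico_pow_le (b : ℝ≥0∞) (k m : ℕ) :
    ∑ j ∈ Finset.Ico k m, b ^ j ≤ b ^ k * (1 - b)⁻¹ := calc
  ∑ j ∈ Finset.Ico k m, b ^ j = b ^ k * ∑ j ∈ Finset.range (m - k), b ^ j := by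
    simp [Finset.sum_Ico_eq_sum_range, pow_add, Finset.mul_sum]
  _ ≤ b ^ k * ∑' j, b ^ j := by gcongr; exact ENNReal.sum_le_tsum _
  _ = b ^ k * (1 - b)⁻¹ := by rw [ENNReal.tsum_geometric]

section Moments

variable {F : Type*} [NormedAddCommGroup F] {μ : Measure Ω} {p : ℝ}

theorem eLpNorm_ofReal_rpow (hp : 0 < p) (f : Ω → F) :
    eLpNorm f (ENNReal.ofReal p) μ ^ p = ∫⁻ ω, ENNReal.ofReal (‖f ω‖ ^ p) ∂μ := by
  rw [eLpNorm_eq_lintegral_rpow_enorm_toReal (by simpa using hp) ENNReal.ofReal_ne_top,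
    ENNReal.toReal_ofReal hp.le, ← ENNReal.rpow_mul, one_div_mul_cancel hp.ne', ENNReal.rpow_one]
  simp_rw [← ENNReal.ofReal_rpow_of_nonneg (norm_nonneg _) hp.le, ofReal_norm]

theorem ofReal_integral_norm_rpow_eq_eLpNorm (hp : 0 < p) {f : Ω → F}
    (hf : Integrable (fun ω => ‖f ω‖ ^ p) μ) :
    ENNReal.ofReal (∫ ω, ‖f ω‖ ^ p ∂μ) = eLpNorm f (ENNReal.ofReal p) μ ^ p := by
  rw [ofReal_integral_eq_lintegral_ofReal hf (ae_of_all _ fun ω => by positivity),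
    eLpNorm_ofReal_rpow hp]

theorem tendsto_integral_norm_rpow_of_tendsto_eLpNorm (hp : 0 < p) {f : ℕ → Ω → F}
    (hf : ∀ n, AEStronglyMeasurable (f n) μ)
    (hlim : Tendsto (fun n => eLpNorm (f n) (ENNReal.ofReal p) μ) atTop (𝓝 0)) :
    Tendsto (fun n => ∫ ω, ‖f n ω‖ ^ p ∂μ) atTop (𝓝 0) := by
  have hint (n : ℕ) :
      ∫ ω, ‖f n ω‖ ^ p ∂μ = (eLpNorm (f n) (ENNReal.ofReal p) μ ^ p).toReal := by
    rw [integral_eq_lintegral_of_nonneg_ae (ae_of_all _ fun ω => by positivity)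
      ((hf n).norm.aemeasurable.pow_const p).aestronglyMeasurable, eLpNorm_ofReal_rpow hp]
  have hpow := hlim.ennrpow_const p
  rw [ENNReal.zero_rpow_of_pos hp] at hpow
  simp_rw [hint]
  exact (ENNReal.tendsto_toReal ENNReal.zero_ne_top).comp hpow

end Moments

section Probability

variable {μ : Measure Ω} {p : ℝ≥0∞}

theorem ProbabilityTheory.IndepFun.eLpNorm_mul {f g : Ω → ℝ} (hf : AEMeasurable f μ)
    (hg : AEMeasurable g μ) (hfg : IndepFun f g μ) (hp0 : p ≠ 0) (hp : p ≠ ∞) :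
    eLpNorm (f * g) p μ = eLpNorm f p μ * eLpNorm g p μ := by
  have hφ : Measurable fun x : ℝ => ‖x‖ₑ ^ p.toReal := measurable_enorm.pow_const _
  have key : ∫⁻ ω, ‖(f * g) ω‖ₑ ^ p.toReal ∂μ
      = (∫⁻ ω, ‖f ω‖ₑ ^ p.toReal ∂μ) * ∫⁻ ω, ‖g ω‖ₑ ^ p.toReal ∂μ := by
    simpa [enorm_mul, ENNReal.mul_rpow_of_nonneg _ _ ENNReal.toReal_nonneg] using
      lintegral_mul_eq_lintegral_mul_lintegral_of_indepFun'' (hφ.comp_aemeasurable hf)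
        (hφ.comp_aemeasurable hg) (hfg.comp hφ hφ)
  simp only [eLpNorm_eq_lintegral_rpow_enorm_toReal hp0 hp, key]
  exact ENNReal.mul_rpow_of_nonneg _ _ (by positivity)

theorem ProbabilityTheory.iIndepFun.eLpNorm_prod {ι : Type*} {f : ι → Ω → ℝ}
    (hf : ∀ i, Measurable (f i)) (hfi : iIndepFun f μ) (hp0 : p ≠ 0) (hp : p ≠ ∞)
    (s : Finset ι) :
    eLpNorm (fun ω => ∏ i ∈ s, f i ω) p μ = ∏ i ∈ s, eLpNorm (f i) p μ := by
  have hφ : Measurable fun x : ℝ => ‖x‖ₑ ^ p.toReal := measurable_enorm.pow_const _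
  have key : ∫⁻ ω, ‖∏ i ∈ s, f i ω‖ₑ ^ p.toReal ∂μ = ∏ i ∈ s, ∫⁻ ω, ‖f i ω‖ₑ ^ p.toReal ∂μ := by
    simpa [enorm_eq_nnnorm, nnnorm_prod, ENNReal.prod_rpow_of_nonneg ENNReal.toReal_nonneg] using
      lintegral_prod_eq_prod_lintegral_of_indepFun s _ (hfi.comp _ fun _ => hφ)
        fun i => hφ.comp (hf i)
  simp only [eLpNorm_eq_lintegral_rpow_enorm_toReal hp0 hp, key]
  exact (ENNReal.prod_rpow_of_nonneg (by positivity)).symm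

theorem tendsto_measure_norm_ge_atTop {F : Type*} [NormedAddCommGroup F] [MeasurableSpace F]
    [OpensMeasurableSpace F] [IsFiniteMeasure μ] {f : Ω → F} (hf : AEMeasurable f μ) :
    Tendsto (fun M : ℝ => μ {ω | M ≤ ‖f ω‖}) atTop (𝓝 0) := by
  have hempty : ⋂ M : ℝ, f ⁻¹' {x | M ≤ ‖x‖} = ∅ := by
    ext ω
    simpa using ⟨‖f ω‖ + 1, by linarith⟩
  have h := tendsto_measure_iInter_atTop
    (fun M => hf.nullMeasurable (measurableSet_le measurable_const measurable_norm))
    (fun M M' hMM' ω (h : M' ≤ ‖f ω‖) => hMM'.trans h) ⟨0, measure_ne_top μ _⟩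
  rwa [hempty, measure_empty] at h

theorem tendstoInMeasure_zero_of_norm_le_mul {ι E F : Type*} [SeminormedAddCommGroup E]
    [NormedAddCommGroup F] [MeasurableSpace F] [OpensMeasurableSpace F] [IsFiniteMeasure μ]
    [Nonempty ι]
    {l : Filter ι} {Z : ι → Ω → E} {U : ι → Ω → ℝ} {V : ι → Ω → F} {V₀ : Ω → F}
    (hU : TendstoInMeasure μ U l 0) (hV : ∀ i, IdentDistrib (V i) V₀ μ μ)
    (hZ : ∀ i ω, ‖Z i ω‖ ≤ ‖U i ω‖ * ‖V i ω‖) :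
    TendstoInMeasure μ Z l 0 := by
  simp only [tendstoInMeasure_iff_norm, Pi.zero_apply, sub_zero] at hU ⊢
  intro δ hδ
  rw [ENNReal.tendsto_nhds_zero]
  intro η hη
  have hη2 : 0 < η / 2 := ENNReal.half_pos hη.ne'
  obtain ⟨M₀, hM₀⟩ := ENNReal.tendsto_atTop_zero.1
    (tendsto_measure_norm_ge_atTop (hV (Classical.arbitrary ι)).aemeasurable_snd) _ hη2
  set M := max M₀ 1
  have hM : 0 < M := lt_max_of_lt_right one_pos
  filter_upwards [ENNReal.tendsto_nhds_zero.1 (hU (δ / M) (div_pos hδ hM)) _ hη2] with i hi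
  have hsub : {ω | δ ≤ ‖Z i ω‖} ⊆ {ω | δ / M ≤ ‖U i ω‖} ∪ V i ⁻¹' {x | M ≤ ‖x‖} := by
    intro ω hω
    by_contra! h
    simp only [Set.mem_union, Set.mem_ofPred_eq, Set.mem_preimage, not_or, not_le] at h hω
    have : ‖U i ω‖ * ‖V i ω‖ < δ := calc
      ‖U i ω‖ * ‖V i ω‖ ≤ ‖U i ω‖ * M := by gcongr; exact h.2.le
      _ < δ / M * M := by gcongr; exact h.1
      _ = δ := div_mul_cancel₀ δ hM.ne'
    exact (hω.trans (hZ i ω)).not_gt this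
  calc μ {ω | δ ≤ ‖Z i ω‖}
      ≤ μ {ω | δ / M ≤ ‖U i ω‖} + μ (V i ⁻¹' {x | M ≤ ‖x‖}) :=
        (measure_mono hsub).trans (measure_union_le _ _)
    _ ≤ η / 2 + η / 2 := by
        refine add_le_add hi ?_
        rw [(hV i).measure_mem_eq (measurableSet_le measurable_const measurable_norm)]
        exact hM₀ M (le_max_left _ _)
    _ = η := ENNReal.add_halves η

end Probability

theorem StrictlyStationary.identDistrib {E : Type*} [MeasurableSpace E] {μ : Measure Ω}
    {X : ℤ → Ω → E} (hX : StrictlyStationary X μ) (m n : ℤ) :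
    IdentDistrib (X m) (X n) μ μ := by
  simpa [Function.comp_def] using (hX (n - m)).comp (measurable_pi_apply m)

theorem IIDZ.eLpNorm_prod_norm_eq_pow {F : Type*} [NormedAddCommGroup F] [MeasurableSpace F]
    [OpensMeasurableSpace F] {μ : Measure Ω} {p : ℝ≥0∞} {X : ℤ → Ω → F} (hX : IIDZ X μ)
    (hXm : ∀ n, Measurable (X n)) (hp0 : p ≠ 0) (hp : p ≠ ∞) (n : ℤ) (k : ℕ) :
    eLpNorm (fun ω => ∏ i ∈ Finset.range k, ‖X (n - i) ω‖) p μ = eLpNorm (X 0) p μ ^ k := by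
  have hinj : Function.Injective fun i : ℕ => n - i := fun a b h => by simpa using h
  have hind : iIndepFun (fun (i : ℕ) ω => ‖X (n - i) ω‖) μ :=
    (hX.1.precomp hinj).comp _ fun _ => measurable_norm
  rw [hind.eLpNorm_prod (fun i => (hXm _).norm) hp0 hp]
  simp [eLpNorm_norm, (hX.2 _).eLpNorm_eq]

section Products

variable {E : Type*} [NormedAddCommGroup E] [NormedSpace ℝ E]

theorem prodOp_succ' {Ω : Type*} (ρ : ℤ → Ω → E →L[ℝ] E) (n : ℤ) (j : ℕ) (ω : Ω) :
    prodOp ρ n (j + 1) ω = (prodOp ρ n j ω).comp (ρ (n - j) ω) := by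
  induction j generalizing n with
  | zero => simp [prodOp]
  | succ j ih =>
    rw [prodOp, ih, prodOp, ContinuousLinearMap.comp_assoc, Nat.cast_succ,
      sub_add_eq_sub_sub_swap]

theorem norm_prodOp_le {Ω : Type*} (ρ : ℤ → Ω → E →L[ℝ] E) (n : ℤ) (j : ℕ) (ω : Ω) :
    ‖prodOp ρ n j ω‖ ≤ ∏ i ∈ Finset.range j, ‖ρ (n - i) ω‖ := by
  induction j with
  | zero => simpa [prodOp] using ContinuousLinearMap.norm_id_le
  | succ j ih =>
    rw [prodOp_succ', Finset.prod_range_succ]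
    exact (ContinuousLinearMap.opNorm_comp_le _ _).trans
      (mul_le_mul_of_nonneg_right ih (norm_nonneg _))

theorem measurable_prodOp_apply [MeasurableSpace E] [BorelSpace E] [SecondCountableTopology E]
    [MeasurableSpace (E →L[ℝ] E)] [OpensMeasurableSpace (E →L[ℝ] E)] {ρ : ℤ → Ω → E →L[ℝ] E}
    (hρ : ∀ n, Measurable (ρ n)) {g : Ω → E} (hg : Measurable g) (n : ℤ) (j : ℕ) :
    Measurable fun ω => prodOp ρ n j ω (g ω) := by
  have happly : Measurable fun q : (E →L[ℝ] E) × E => q.1 q.2 :=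
    isBoundedBilinearMap_apply.continuous.measurable
  induction j generalizing g with
  | zero => simpa [prodOp] using hg
  | succ j ih =>
    simp only [prodOp_succ', ContinuousLinearMap.comp_apply]
    exact ih (happly.comp ((hρ _).prodMk hg))

theorem ae_eq_sum_prodOp_apply_add {μ : Measure Ω} {ρ : ℤ → Ω → E →L[ℝ] E} {ε Y : ℤ → Ω → E}
    (hY : ∀ n, ∀ᵐ ω ∂μ, Y n ω = ρ n ω (Y (n - 1) ω) + ε n ω) (n : ℤ) (k : ℕ) :
    ∀ᵐ ω ∂μ, Y n ω = ∑ j ∈ Finset.range k, prodOp ρ n j ω (ε (n - j) ω)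
      + prodOp ρ n k ω (Y (n - k) ω) := by
  induction k with
  | zero => simp [prodOp]
  | succ k ih =>
    filter_upwards [ih, hY (n - k)] with ω hωk hω
    rw [hωk, hω, map_add, Finset.sum_range_succ, prodOp_succ', ContinuousLinearMap.comp_apply,
      Nat.cast_succ, ← sub_sub, add_assoc, add_comm (prodOp ρ n k ω (ε _ ω))]

end Products

section Recursion

variable {E : Type*} [NormedAddCommGroup E] [NormedSpace ℝ E] [MeasurableSpace E]
  [BorelSpace E] [MeasurableSpace (E →L[ℝ] E)] [OpensMeasurableSpace (E →L[ℝ] E)]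
  {μ : Measure Ω} {ρ : ℤ → Ω → E →L[ℝ] E} {ε : ℤ → Ω → E} {p : ℝ≥0∞}

theorem eLpNorm_prodOp_apply_le (hρm : ∀ n, Measurable (ρ n)) (hεm : ∀ n, Measurable (ε n))
    (hρ : IIDZ ρ μ) (hε : IIDZ ε μ)
    (hindep : IndepFun (fun ω n => ρ n ω) (fun ω n => ε n ω) μ) (hp0 : p ≠ 0) (hp : p ≠ ∞)
    (n : ℤ) (j : ℕ) :
    eLpNorm (fun ω => prodOp ρ n j ω (ε (n - j) ω)) p μ
      ≤ eLpNorm (ρ 0) p μ ^ j * eLpNorm (ε 0) p μ := by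
  set U : Ω → ℝ := fun ω => ∏ i ∈ Finset.range j, ‖ρ (n - i) ω‖
  have hU : Measurable U := Finset.measurable_fun_prod _ fun i _ => (hρm _).norm
  have hφ : Measurable fun u : ℤ → E →L[ℝ] E => ∏ i ∈ Finset.range j, ‖u (n - i)‖ :=
    Finset.measurable_fun_prod _ fun i _ => (measurable_pi_apply _).norm
  have hψ : Measurable fun v : ℤ → E => ‖v (n - j)‖ := (measurable_pi_apply _).norm
  have hind : IndepFun U (fun ω => ‖ε (n - j) ω‖) μ := hindep.comp hφ hψ
  calc eLpNorm (fun ω => prodOp ρ n j ω (ε (n - j) ω)) p μ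
      ≤ eLpNorm (U * fun ω => ‖ε (n - j) ω‖) p μ := by
        refine eLpNorm_mono fun ω => ?_
        rw [Pi.mul_apply, Real.norm_of_nonneg (by positivity)]
        exact ((prodOp ρ n j ω).le_opNorm _).trans
          (mul_le_mul_of_nonneg_right (norm_prodOp_le ρ n j ω) (norm_nonneg _))
    _ = eLpNorm (ρ 0) p μ ^ j * eLpNorm (ε 0) p μ := by
        rw [hind.eLpNorm_mul hU.aemeasurable (hεm _).norm.aemeasurable hp0 hp,
          hρ.eLpNorm_prod_norm_eq_pow hρm hp0 hp, eLpNorm_norm, (hε.2 _).eLpNorm_eq]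

theorem tendstoInMeasure_prodOp_apply (hρm : ∀ n, Measurable (ρ n)) (hρ : IIDZ ρ μ)
    (hp0 : p ≠ 0) (hp : p ≠ ∞) (hb : eLpNorm (ρ 0) p μ < 1) {Y : ℤ → Ω → E}
    (hY : ∀ m, IdentDistrib (Y m) (Y 0) μ μ) (n : ℤ) :
    TendstoInMeasure μ (fun k ω => prodOp ρ n k ω (Y (n - k) ω)) atTop 0 := by
  have := hρ.1.isProbabilityMeasure
  refine tendstoInMeasure_zero_of_norm_le_mul
    (U := fun k ω => ∏ i ∈ Finset.range k, ‖ρ (n - i) ω‖) (V := fun k => Y (n - k))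
    ?_ (fun k => hY _) fun k ω => ?_
  · refine tendstoInMeasure_of_tendsto_eLpNorm hp0
      (fun k => (Finset.measurable_fun_prod _ fun i _ => (hρm _).norm).aestronglyMeasurable)
      aestronglyMeasurable_const ?_
    simpa [hρ.eLpNorm_prod_norm_eq_pow hρm hp0 hp] using
      ENNReal.tendsto_pow_atTop_nhds_zero_of_lt_one hb
  · rw [Real.norm_of_nonneg (by positivity)]
    exact ((prodOp ρ n k ω).le_opNorm _).trans
      (mul_le_mul_of_nonneg_right (norm_prodOp_le ρ n k ω) (norm_nonneg _))

theorem eLpNorm_sum_Ico_prodOp_apply_le [SecondCountableTopology E]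
    (hρm : ∀ n, Measurable (ρ n)) (hεm : ∀ n, Measurable (ε n)) (hρ : IIDZ ρ μ) (hε : IIDZ ε μ)
    (hindep : IndepFun (fun ω n => ρ n ω) (fun ω n => ε n ω) μ) (hp1 : 1 ≤ p) (hp : p ≠ ∞)
    (n : ℤ) (k m : ℕ) :
    eLpNorm (fun ω => ∑ j ∈ Finset.Ico k m, prodOp ρ n j ω (ε (n - j) ω)) p μ
      ≤ eLpNorm (ρ 0) p μ ^ k * (1 - eLpNorm (ρ 0) p μ)⁻¹ * eLpNorm (ε 0) p μ := by
  have hp0 : p ≠ 0 := (zero_lt_one.trans_le hp1).ne'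
  calc eLpNorm (fun ω => ∑ j ∈ Finset.Ico k m, prodOp ρ n j ω (ε (n - j) ω)) p μ
      = eLpNorm (∑ j ∈ Finset.Ico k m, fun ω => prodOp ρ n j ω (ε (n - j) ω)) p μ := by
        simp only [Finset.sum_fn]
    _ ≤ ∑ j ∈ Finset.Ico k m, eLpNorm (fun ω => prodOp ρ n j ω (ε (n - j) ω)) p μ :=
        eLpNorm_sum_le (fun j _ => (measurable_prodOp_apply hρm (hεm _) n j).aestronglyMeasurable)
          hp1
    _ ≤ ∑ j ∈ Finset.Ico k m, eLpNorm (ρ 0) p μ ^ j * eLpNorm (ε 0) p μ :=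
        Finset.sum_le_sum fun j _ => eLpNorm_prodOp_apply_le hρm hεm hρ hε hindep hp0 hp n j
    _ ≤ eLpNorm (ρ 0) p μ ^ k * (1 - eLpNorm (ρ 0) p μ)⁻¹ * eLpNorm (ε 0) p μ := by
        rw [← Finset.sum_mul]
        gcongr
        exact ENNReal.sum_Ico_pow_le _ _ _

theorem eLpNorm_sub_sum_prodOp_apply_le [SecondCountableTopology E]
    (hρm : ∀ n, Measurable (ρ n)) (hεm : ∀ n, Measurable (ε n)) (hρ : IIDZ ρ μ) (hε : IIDZ ε μ)
    (hindep : IndepFun (fun ω n => ρ n ω) (fun ω n => ε n ω) μ) (hp1 : 1 ≤ p) (hp : p ≠ ∞)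
    (hb : eLpNorm (ρ 0) p μ < 1) {Y : ℤ → Ω → E} (hY : ∀ m, IdentDistrib (Y m) (Y 0) μ μ)
    (hYsol : ∀ n, ∀ᵐ ω ∂μ, Y n ω = ρ n ω (Y (n - 1) ω) + ε n ω) (n : ℤ) (k : ℕ) :
    eLpNorm (fun ω => Y n ω - ∑ j ∈ Finset.range k, prodOp ρ n j ω (ε (n - j) ω)) p μ
      ≤ eLpNorm (ρ 0) p μ ^ k * (1 - eLpNorm (ρ 0) p μ)⁻¹ * eLpNorm (ε 0) p μ := by
  set R := fun ω => Y n ω - ∑ j ∈ Finset.range k, prodOp ρ n j ω (ε (n - j) ω)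
  have hT := tendstoInMeasure_prodOp_apply hρm hρ (zero_lt_one.trans_le hp1).ne' hp hb hY n
  have hRT : TendstoInMeasure μ (fun m ω => R ω - prodOp ρ n m ω (Y (n - m) ω)) atTop R := by
    rw [tendstoInMeasure_iff_norm] at hT ⊢
    simpa using hT
  refine eLpNorm_le_of_tendstoInMeasure (Eventually.of_forall fun m =>
      eLpNorm_sum_Ico_prodOp_apply_le hρm hεm hρ hε hindep hp1 hp n k m)
    (hRT.congr' ?_ EventuallyEq.rfl) fun m => (Finset.measurable_fun_sum _ fun j _ =>
      measurable_prodOp_apply hρm (hεm _) n j).aestronglyMeasurable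
  filter_upwards [eventually_ge_atTop k] with m hkm
  filter_upwards [ae_eq_sum_prodOp_apply_add hYsol n m] with ω hω
  simp only [R]
  rw [hω, ← Finset.sum_range_add_sum_Ico _ hkm]
  abel

end Recursion

theorem brca_stationary_solution_unique_general
    (μ : Measure Ω) (μ0 : B)
    (ρ : ℤ → Ω → B →L[ℝ] B) (ε : ℤ → Ω → B)
    (hρmeas : ∀ n, Measurable (ρ n)) (hεmeas : ∀ n, Measurable (ε n))
    (hρiid : IIDZ ρ μ) (hεiid : IIDZ ε μ)
    (hindep : IndepFun (fun ω (n : ℤ) => ρ n ω) (fun ω (n : ℤ) => ε n ω) μ)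
    (p : ℝ) (hp : 1 ≤ p)
    (hεp : Integrable (fun ω => ‖ε 0 ω‖ ^ p) μ)
    (hρp : Integrable (fun ω => ‖ρ 0 ω‖ ^ p) μ)
    (hρlt : ∫ ω, ‖ρ 0 ω‖ ^ p ∂μ < 1)
    (X : ℤ → Ω → B) (hXmeas : ∀ n, Measurable (X n))
    (hXstat : StrictlyStationary X μ)
    (hXsol : ∀ n : ℤ, ∀ᵐ ω ∂μ, X n ω - μ0 = ρ n ω (X (n-1) ω - μ0) + ε n ω) :
    Tendsto (fun n : ℕ =>
        ∫ ω, ‖X n ω - μ0 - ∑ j ∈ Finset.range n, prodOp ρ n j ω (ε ((n : ℤ) - j) ω)‖ ^ p ∂μ)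
      atTop (𝓝 0) := by
  have hp0 : 0 < p := zero_lt_one.trans_le hp
  set b := eLpNorm (ρ 0) (ENNReal.ofReal p) μ
  set c := eLpNorm (ε 0) (ENNReal.ofReal p) μ
  have hb : b < 1 := by
    have h : b ^ p < 1 :=
      ofReal_integral_norm_rpow_eq_eLpNorm hp0 hρp ▸ ENNReal.ofReal_lt_one.2 hρlt
    simpa [ENNReal.rpow_rpow_inv hp0.ne'] using ENNReal.rpow_lt_one h (inv_pos.2 hp0)
  have hc : c ≠ ∞ := by
    have h : c ^ p ≠ ∞ := ofReal_integral_norm_rpow_eq_eLpNorm hp0 hεp ▸ ENNReal.ofReal_ne_top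
    rwa [Ne, ENNReal.rpow_eq_top_iff_of_pos hp0] at h
  have hY (m : ℤ) : IdentDistrib (fun ω => X m ω - μ0) (fun ω => X 0 ω - μ0) μ μ :=
    (hXstat.identDistrib m 0).comp (measurable_id.sub_const μ0)
  have hbound (n : ℕ) := eLpNorm_sub_sum_prodOp_apply_le hρmeas hεmeas hρiid hεiid hindep
    (ENNReal.one_le_ofReal.2 hp) ENNReal.ofReal_ne_top hb hY hXsol n n
  have hgeom : Tendsto (fun n : ℕ => b ^ n * (1 - b)⁻¹ * c) atTop (𝓝 0) := by
    have hK : (1 - b)⁻¹ * c ≠ ∞ :=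
      ENNReal.mul_ne_top (ENNReal.inv_ne_top.2 (tsub_pos_of_lt hb).ne') hc
    simpa [mul_assoc] using ENNReal.Tendsto.mul_const
      (ENNReal.tendsto_pow_atTop_nhds_zero_of_lt_one hb) (Or.inr hK)
  refine tendsto_integral_norm_rpow_of_tendsto_eLpNorm hp0 (fun n =>
    ((hXmeas n).sub_const μ0 |>.sub <| Finset.measurable_fun_sum _ fun j _ =>
      measurable_prodOp_apply hρmeas (hεmeas _) n j).aestronglyMeasurable) ?_
  exact tendsto_of_tendsto_of_tendsto_of_le_of_le tendsto_const_nhds hgeom (fun n => zero_le) hbound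

/-- Uniqueness: any strictly stationary `L^p` solution of the BRCA(1) recursion coincides
in `L^p` with `μ₀ + ∑_{j≥0} A_{n,j} ε_{n-j}`. -/
theorem brca_stationary_solution_unique
    (μ : Measure Ω) [IsProbabilityMeasure μ] (μ0 : B)
    (ρ : ℤ → Ω → B →L[ℝ] B) (ε : ℤ → Ω → B)
    (hρmeas : ∀ n, Measurable (ρ n)) (hεmeas : ∀ n, Measurable (ε n))
    (hρiid : IIDZ ρ μ) (hεiid : IIDZ ε μ)
    (hindep : IndepFun (fun ω (n : ℤ) => ρ n ω) (fun ω (n : ℤ) => ε n ω) μ)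
    (p : ℝ) (hp : 1 ≤ p)
    (hεmean : ∫ ω, ε 0 ω ∂μ = 0)
    (hεp : Integrable (fun ω => ‖ε 0 ω‖ ^ p) μ)
    (hρp : Integrable (fun ω => ‖ρ 0 ω‖ ^ p) μ)
    (hρlt : ∫ ω, ‖ρ 0 ω‖ ^ p ∂μ < 1)
    (X : ℤ → Ω → B) (hXmeas : ∀ n, Measurable (X n))
    (hXstat : StrictlyStationary X μ)
    (hXp : ∀ n, Integrable (fun ω => ‖X n ω‖ ^ p) μ)
    (hXsol : ∀ n : ℤ, ∀ᵐ ω ∂μ, X n ω - μ0 = ρ n ω (X (n-1) ω - μ0) + ε n ω) :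
    Tendsto (fun n : ℕ =>
        ∫ ω, ‖X n ω - μ0 - ∑ j ∈ Finset.range n, prodOp ρ n j ω (ε ((n : ℤ) - j) ω)‖ ^ p ∂μ)
      atTop (𝓝 0) :=
  brca_stationary_solution_unique_general μ μ0 ρ ε hρmeas hεmeas hρiid hεiid hindep p hp hεp hρp
    hρlt X hXmeas hXstat hXsol
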